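/- Let I be a finite set, 2^I = a⁰ ∪ a¹ a partition, and suppose that for every set X ⊆ 2^I with |X| = k and each i ∈ {0,1}, |⋂_{x∈X}(a^i + x)|/2^{|I|} ≤ 2^{-k} + δ. Then for any set W ⊆ 2^I, if the set Z = {v ∈ 2^I : ∃ i ∈ {0,1}, a^i + v ⊆ W} has more than 2(k−1) elements, then |W|/2^{|I|} ≥ 1 − 2^{-k} − δ. -/

import Mathlib

/-! Pigeonhole over the two labels gives `k` points of `Z` witnessed by the same `i`; call them
`X`. Since `aⁱ` and `a¹⁻ⁱ` cover `2^I`, every point outside `W` lies in all the translates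
`a¹⁻ⁱ + x` with `x ∈ X`, so `2^{|I|} - |W|` is bounded by the size of their intersection,
which is at most `(2^{-k} + δ) 2^{|I|}` by hypothesis. -/

open scoped Classical

open Finset

lemma exists_card_eq_forall_of_two_mul_lt_card {α : Type*} [Fintype α] (P : Bool → α → Prop)
    [DecidablePred fun v => ∃ i, P i v] (k : ℕ) (h : 2 * (k - 1) < #{v | ∃ i, P i v}) :
    ∃ (i : Bool) (X : Finset α), #X = k ∧ ∀ x ∈ X, P i x := by
  have hsplit : #{v | ∃ i, P i v} ≤ #{v | P false v} + #{v | P true v} := by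
    refine (card_le_card fun v hv => ?_).trans (card_union_le _ _)
    obtain ⟨i, hi⟩ := (mem_filter.1 hv).2
    cases i
    · exact mem_union_left _ (mem_filter.2 ⟨mem_univ v, hi⟩)
    · exact mem_union_right _ (mem_filter.2 ⟨mem_univ v, hi⟩)
  have hk : k ≤ #{v | P false v} ∨ k ≤ #{v | P true v} := by omega
  rcases hk with hk | hk <;>
  · obtain ⟨X, hXP, hXk⟩ := exists_subset_card_eq hk
    exact ⟨_, X, hXk, fun x hx => (mem_filter.1 (hXP hx)).2⟩

section Translates

variable {G : Type*} [AddGroup G] [Fintype G] [DecidableEq G]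

lemma mem_image_add_right_of_union_eq_univ {s s' : Finset G} (hcover : s ∪ s' = univ)
    {t x : G} (ht : t ∉ s.image (· + x)) : t ∈ s'.image (· + x) := by
  have hmem : t - x ∈ s ∪ s' := hcover ▸ mem_univ _
  rcases mem_union.1 hmem with h | h
  · exact absurd (mem_image.2 ⟨t - x, h, sub_add_cancel t x⟩) ht
  · exact mem_image.2 ⟨t - x, h, sub_add_cancel t x⟩

lemma card_sub_card_le_card_filter_forall_mem_image_add {s s' : Finset G}
    (hcover : s ∪ s' = univ) {X W : Finset G} (hXW : ∀ x ∈ X, s.image (· + x) ⊆ W) :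
    (Fintype.card G : ℝ) - #W ≤ #{t | ∀ x ∈ X, t ∈ s'.image (· + x)} := by
  have hsub : Wᶜ ⊆ univ.filter fun t => ∀ x ∈ X, t ∈ s'.image (· + x) := fun t ht =>
    mem_filter.2 ⟨mem_univ t, fun x hx =>
      mem_image_add_right_of_union_eq_univ hcover fun h => mem_compl.1 ht (hXW x hx h)⟩
  have hcard := card_le_card hsub
  rw [card_compl] at hcard
  rw [← Nat.cast_sub (card_le_univ W)]
  exact_mod_cast hcard

end Translates

theorem stmt11 {I : Type*} [Fintype I] [DecidableEq I] (k : ℕ) (δ : ℝ)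
    (a : Bool → Finset (I → ZMod 2))
    (hpart : a false ∪ a true = Finset.univ)
    (hyp : ∀ (X : Finset (I → ZMod 2)), X.card = k → ∀ i : Bool,
      ((Finset.univ.filter
          (fun t => ∀ x ∈ X, t ∈ (a i).image (· + x))).card : ℝ) / 2 ^ Fintype.card I
        ≤ (1 / 2 : ℝ) ^ k + δ)
    (W : Finset (I → ZMod 2))
    (hZ : 2 * (k - 1) <
      (Finset.univ.filter
        (fun v : I → ZMod 2 => ∃ i : Bool, (a i).image (· + v) ⊆ W)).card) :
    1 - (1 / 2 : ℝ) ^ k - δ ≤ (W.card : ℝ) / 2 ^ Fintype.card I := by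
  obtain ⟨i, X, hXk, hXW⟩ := exists_card_eq_forall_of_two_mul_lt_card
    (fun i v => (a i).image (· + v) ⊆ W) k hZ
  have hcover : a i ∪ a (!i) = univ := by
    cases i
    · exact hpart
    · rw [union_comm]; exact hpart
  have hcompl := card_sub_card_le_card_filter_forall_mem_image_add hcover hXW
  have hcardG : (Fintype.card (I → ZMod 2) : ℝ) = 2 ^ Fintype.card I := by simp
  rw [hcardG] at hcompl
  have hpos : (0 : ℝ) < 2 ^ Fintype.card I := by positivity
  have hdiv := div_le_div_of_nonneg_right hcompl hpos.le
  rw [sub_div, div_self hpos.ne'] at hdiv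
  linarith [hyp X hXk (!i)]
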